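/- The number of UUU-avoiding Dyck words of semilength n having exactly j occurrences of the factor UU equals binom(n,2j)·C_j, where C_j is the j-th Catalan number. -/

import Mathlib

/-!
A `UUU`-avoiding Dyck word ends in `D` and its runs of `U` have length one or two, so it factors
uniquely into blocks `UUD`, `UD` and `D`: the semilength is the number of blocks and the number of
factors `UU` is the number of blocks `UUD`. A block `UD` leaves the height unchanged while `UUD`
and `D` move it up and down by one, so the word is a Dyck path iff deleting the blocks `UD` and
reading `UUD` as `U` leaves a Dyck path. With `j` factors `UU` that reduced word is a Dyck word of
semilength `j`, and the word is determined by it together with the positions of its `2j` blocks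
among the `n` blocks: `binom(n, 2j) · C_j` choices.
-/

-- `true` encodes `U` and `false` encodes `D`.
def IsDyckWord (n : ℕ) (l : List Bool) : Prop :=
  l.count true = n ∧ l.count false = n ∧
    ∀ p : List Bool, p <+: l → p.count false ≤ p.count true

def countFactor (pat l : List Bool) : ℕ :=
  ((List.range l.length).filter fun i => pat.isPrefixOf (l.drop i)).length

open List

theorem countFactor_cons (pat : List Bool) (a : Bool) (l : List Bool) :
    countFactor pat (a :: l) = countFactor pat l + if pat.isPrefixOf (a :: l) then 1 else 0 := by
  simp only [countFactor, length_cons, range_succ_eq_map, filter_cons, drop_zero, filter_map,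
    Function.comp_def, drop_succ_cons]
  split <;> simp [add_comm]

theorem countFactor_pos_of_isInfix {pat l : List Bool} (hpat : pat ≠ []) (h : pat <:+: l) :
    0 < countFactor pat l := by
  obtain ⟨s, t, rfl⟩ := h
  induction s with
  | nil =>
    obtain ⟨b, pat, rfl⟩ := exists_cons_of_ne_nil hpat
    simp [countFactor_cons]
  | cons a s ih =>
    rw [append_assoc] at ih ⊢
    rw [cons_append, countFactor_cons]
    omega

def StaysNonneg : ℕ → List Bool → Prop
  | _, [] => True
  | h, true :: l => StaysNonneg (h + 1) l
  | h, false :: l => 0 < h ∧ StaysNonneg (h - 1) l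

theorem forall_prefix_cons_iff {α : Type*} {P : List α → Prop} {a : α} {l : List α} :
    (∀ p, p <+: a :: l → P p) ↔ P [] ∧ ∀ p, p <+: l → P (a :: p) := by
  refine ⟨fun H => ⟨H [] nil_prefix, fun p hp => H _ (cons_prefix_cons.mpr ⟨rfl, hp⟩)⟩,
    fun ⟨h0, H⟩ p hp => ?_⟩
  rcases prefix_cons_iff.mp hp with rfl | ⟨t, rfl, ht⟩
  exacts [h0, H t ht]

theorem staysNonneg_iff (h : ℕ) (l : List Bool) :
    StaysNonneg h l ↔ ∀ p, p <+: l → p.count false ≤ p.count true + h := by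
  induction l generalizing h with
  | nil => simp [StaysNonneg]
  | cons a l ih =>
    rw [forall_prefix_cons_iff]
    cases a with
    | false =>
      cases h with
      | zero => simpa [StaysNonneg] using ⟨[], nil_prefix, le_rfl⟩
      | succ h =>
        simp only [StaysNonneg, ih, Nat.add_sub_cancel, h.succ_pos, count_nil, zero_le, true_and]
        exact forall₂_congr fun p _ => by
          rw [count_cons_self, count_cons_of_ne (by decide)]; omega
    | true =>
      simp only [StaysNonneg, ih, count_nil, zero_le, true_and]
      exact forall₂_congr fun p _ => by
        rw [count_cons_self, count_cons_of_ne (by decide)]; omega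

theorem isDyckWord_iff {n : ℕ} {l : List Bool} :
    IsDyckWord n l ↔ l.count true = n ∧ l.count false = n ∧ StaysNonneg 0 l := by
  simp [IsDyckWord, staysNonneg_iff]

theorem IsDyckWord.length_eq {n : ℕ} {l : List Bool} (h : IsDyckWord n l) : l.length = 2 * n := by
  rw [← count_true_add_count_false, h.1, h.2.1, two_mul]

theorem IsDyckWord.not_suffix_true {n : ℕ} {l : List Bool} (h : IsDyckWord n l) :
    ¬ [true] <:+ l := by
  rintro ⟨p, rfl⟩
  obtain ⟨ht, hf, hpre⟩ := h
  have := hpre p (prefix_append _ _)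
  rw [count_append, count_singleton_self] at ht
  rw [count_append, count_cons_of_ne (by decide), count_nil] at hf
  omega

open DyckStep in
def dyckStepEquivBool : DyckStep ≃ Bool where
  toFun s := s = U
  invFun b := bif b then U else D
  left_inv s := by cases s <;> rfl
  right_inv b := by cases b <;> rfl

theorem count_map_dyckStepEquivBool (l : List DyckStep) (s : DyckStep) :
    (l.map dyckStepEquivBool).count (dyckStepEquivBool s) = l.count s :=
  count_map_of_injective _ _ dyckStepEquivBool.injective _

theorem isDyckWord_map_dyckStepEquivBool (p : DyckWord) :
    IsDyckWord p.semilength (p.toList.map dyckStepEquivBool) := by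
  refine ⟨count_map_dyckStepEquivBool _ .U, ?_, fun q hq => ?_⟩
  · exact (count_map_dyckStepEquivBool _ .D).trans p.count_U_eq_count_D.symm
  · rw [prefix_iff_eq_take.mp hq, ← map_take]
    exact (count_map_dyckStepEquivBool _ .D).trans_le
      ((p.count_D_le_count_U _).trans_eq (count_map_dyckStepEquivBool _ .U).symm)

theorem IsDyckWord.exists_map_dyckStepEquivBool_eq {j : ℕ} {l : List Bool}
    (hl : IsDyckWord j l) :
    ∃ p : DyckWord, p.semilength = j ∧ p.toList.map dyckStepEquivBool = l := by
  have hc (b : Bool) {l' : List Bool} :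
      (l'.map dyckStepEquivBool.symm).count (dyckStepEquivBool.symm b) = l'.count b :=
    count_map_of_injective _ _ dyckStepEquivBool.symm.injective b
  refine ⟨⟨l.map dyckStepEquivBool.symm, ?_, fun i => ?_⟩, (hc true).trans hl.1, ?_⟩
  · exact (hc true).trans (hl.1.trans (hl.2.1.symm.trans (hc false).symm))
  · rw [← map_take]
    exact (hc false).trans_le ((hl.2.2 _ (take_prefix _ _)).trans_eq (hc true).symm)
  · simp [map_map]

theorem ncard_isDyckWord (j : ℕ) : {l | IsDyckWord j l}.ncard = catalan j := by
  have himage : {l | IsDyckWord j l} =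
      (fun p : DyckWord => p.toList.map dyckStepEquivBool) '' {p | p.semilength = j} := by
    ext l
    refine ⟨fun hl => hl.exists_map_dyckStepEquivBool_eq, ?_⟩
    rintro ⟨p, rfl, rfl⟩
    exact isDyckWord_map_dyckStepEquivBool p
  have hinj : Function.Injective fun p : DyckWord => p.toList.map dyckStepEquivBool :=
    fun p q h => DyckWord.ext (map_injective_iff.mpr dyckStepEquivBool.injective h)
  rw [himage, Set.ncard_image_of_injective _ hinj, ← Nat.card_coe_set_eq, Set.coe_ofPred,
    Nat.card_eq_fintype_card, DyckWord.card_dyckWord_semilength_eq_catalan]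

-- Coded so that `List.reduceOption` deletes the blocks `UD` and reads `UUD` as `U`.
def dyckBlock : Option Bool → List Bool
  | some true => [true, true, false]
  | none => [true, false]
  | some false => [false]

def ofDyckBlocks (x : List (Option Bool)) : List Bool := x.flatMap dyckBlock

@[simp] theorem ofDyckBlocks_nil : ofDyckBlocks [] = [] := rfl

@[simp] theorem ofDyckBlocks_cons (a : Option Bool) (x : List (Option Bool)) :
    ofDyckBlocks (a :: x) = dyckBlock a ++ ofDyckBlocks x := rfl

theorem length_eq_count_some_add_count_none (x : List (Option Bool)) :
    x.length = x.count (some true) + x.count (some false) + x.count none := by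
  induction x with
  | nil => rfl
  | cons a x ih => rcases a with _ | _ | _ <;> simp [ih] <;> omega

theorem count_reduceOption {α : Type*} [DecidableEq α] (x : List (Option α)) (b : α) :
    x.reduceOption.count b = x.count (some b) := by
  induction x with
  | nil => rfl
  | cons a x ih => rcases a with _ | a <;> simp [count_cons, ih]

theorem count_false_ofDyckBlocks (x : List (Option Bool)) :
    (ofDyckBlocks x).count false = x.length := by
  induction x with
  | nil => rfl
  | cons a x ih => rcases a with _ | _ | _ <;> simp [dyckBlock, ih]

theorem count_true_ofDyckBlocks (x : List (Option Bool)) :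
    (ofDyckBlocks x).count true = 2 * x.count (some true) + x.count none := by
  induction x with
  | nil => rfl
  | cons a x ih => rcases a with _ | _ | _ <;> simp [dyckBlock, ih] <;> omega

theorem countFactor_ofDyckBlocks_UU (x : List (Option Bool)) :
    countFactor [true, true] (ofDyckBlocks x) = x.count (some true) := by
  induction x with
  | nil => rfl
  | cons a x ih => rcases a with _ | _ | _ <;> simp [dyckBlock, countFactor_cons, ih]

theorem countFactor_ofDyckBlocks_UUU (x : List (Option Bool)) :
    countFactor [true, true, true] (ofDyckBlocks x) = 0 := by
  induction x with
  | nil => rfl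
  | cons a x ih => rcases a with _ | _ | _ <;> simp [dyckBlock, countFactor_cons, ih]

theorem not_UUU_infix_ofDyckBlocks (x : List (Option Bool)) :
    ¬ [true, true, true] <:+: ofDyckBlocks x := fun h =>
  (countFactor_pos_of_isInfix (cons_ne_nil _ _) h).ne' (countFactor_ofDyckBlocks_UUU x)

theorem staysNonneg_ofDyckBlocks (h : ℕ) (x : List (Option Bool)) :
    StaysNonneg h (ofDyckBlocks x) ↔ StaysNonneg h x.reduceOption := by
  induction x generalizing h with
  | nil => rfl
  | cons a x ih => rcases a with _ | _ | _ <;> simp [dyckBlock, StaysNonneg, ih]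

theorem ofDyckBlocks_injective : Function.Injective ofDyckBlocks := by
  intro x
  induction x with
  | nil => rintro (_ | ⟨(_ | _ | _), _⟩) h <;> simp [dyckBlock] at h ⊢
  | cons a x ih =>
    rintro (_ | ⟨b, y⟩) h
    · rcases a with _ | _ | _ <;> simp [dyckBlock] at h
    · rcases a with _ | _ | _ <;> rcases b with _ | _ | _ <;> simp [dyckBlock] at h ⊢ <;>
        exact ih h

theorem exists_ofDyckBlocks_eq : ∀ l : List Bool, ¬ [true, true, true] <:+: l →
    ¬ [true] <:+ l → ∃ x, ofDyckBlocks x = l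
  | [], _, _ => ⟨[], rfl⟩
  | false :: l, h₁, h₂ => by
    have hl : l <:+ false :: l := suffix_cons _ _
    obtain ⟨x, rfl⟩ := exists_ofDyckBlocks_eq l (fun h => h₁ (h.trans hl.isInfix))
      (fun h => h₂ (h.trans hl))
    exact ⟨some false :: x, rfl⟩
  | true :: false :: l, h₁, h₂ => by
    have hl : l <:+ true :: false :: l := ⟨[true, false], rfl⟩
    obtain ⟨x, rfl⟩ := exists_ofDyckBlocks_eq l (fun h => h₁ (h.trans hl.isInfix))
      (fun h => h₂ (h.trans hl))
    exact ⟨none :: x, rfl⟩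
  | true :: true :: false :: l, h₁, h₂ => by
    have hl : l <:+ true :: true :: false :: l := ⟨[true, true, false], rfl⟩
    obtain ⟨x, rfl⟩ := exists_ofDyckBlocks_eq l (fun h => h₁ (h.trans hl.isInfix))
      (fun h => h₂ (h.trans hl))
    exact ⟨some true :: x, rfl⟩
  | true :: true :: true :: l, h₁, _ => absurd (prefix_append _ _).isInfix h₁
  | [true], _, h₂ => absurd suffix_rfl h₂
  | [true, true], _, h₂ => absurd ⟨[true], rfl⟩ h₂

theorem ofDyckBlocks_mem_iff {n j : ℕ} (x : List (Option Bool)) :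
    IsDyckWord n (ofDyckBlocks x) ∧ countFactor [true, true] (ofDyckBlocks x) = j ↔
      x.length = n ∧ IsDyckWord j x.reduceOption := by
  simp only [isDyckWord_iff, staysNonneg_ofDyckBlocks, count_true_ofDyckBlocks,
    count_false_ofDyckBlocks, countFactor_ofDyckBlocks_UU, count_reduceOption]
  have := length_eq_count_some_add_count_none x
  constructor
  · rintro ⟨⟨h₁, h₂, h₃⟩, h₄⟩
    exact ⟨h₂, by omega, by omega, h₃⟩
  · rintro ⟨h₁, h₂, h₃, h₄⟩
    exact ⟨⟨by omega, h₁, h₄⟩, h₂⟩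

theorem setOf_UUU_free_eq_image (n j : ℕ) :
    {l : List Bool | IsDyckWord n l ∧ ¬ [true, true, true] <:+: l ∧
        countFactor [true, true] l = j} =
      ofDyckBlocks '' {x | x.length = n ∧ IsDyckWord j x.reduceOption} := by
  ext l
  constructor
  · rintro ⟨hl, h₁, h₂⟩
    obtain ⟨x, rfl⟩ := exists_ofDyckBlocks_eq l h₁ hl.not_suffix_true
    exact ⟨x, (ofDyckBlocks_mem_iff x).mp ⟨hl, h₂⟩, rfl⟩
  · rintro ⟨x, hx, rfl⟩
    obtain ⟨hl, h₂⟩ := (ofDyckBlocks_mem_iff x).mpr hx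
    exact ⟨hl, not_UUU_infix_ofDyckBlocks x, h₂⟩

theorem count_true_ofFn {n : ℕ} (f : Fin n → Bool) :
    (ofFn f).count true = (Finset.univ.filter fun i => f i = true).card := by
  rw [Finset.card_filter]
  induction n with
  | zero => simp
  | succ n ih =>
    rw [ofFn_succ, count_cons, ih, Fin.sum_univ_succ]
    cases f 0 <;> simp [add_comm]

theorem ncard_setOf_length_count_true (n k : ℕ) :
    {m : List Bool | m.length = n ∧ m.count true = k}.ncard = n.choose k := by
  have himage : {m : List Bool | m.length = n ∧ m.count true = k} =
      (fun s : Finset (Fin n) => ofFn fun i => decide (i ∈ s)) '' {s | s.card = k} := by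
    ext m
    constructor
    · rintro ⟨rfl, rfl⟩
      refine ⟨Finset.univ.filter fun i => m[i] = true, ?_, ?_⟩
      · simp [← count_true_ofFn]
      · simp
    · rintro ⟨s, rfl, rfl⟩
      simp [count_true_ofFn]
  have hinj : Function.Injective fun s : Finset (Fin n) => ofFn fun i => decide (i ∈ s) :=
    fun s t h => by simpa [Finset.ext_iff, funext_iff] using ofFn_injective h
  rw [himage, Set.ncard_image_of_injective _ hinj, ← Nat.card_coe_set_eq, Set.coe_ofPred,
    Nat.card_eq_fintype_card, Fintype.card_finset_len, Fintype.card_fin]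

section Masks

variable {α : Type*}

def fillMask : List Bool → List α → List (Option α)
  | [], _ => []
  | false :: m, w => none :: fillMask m w
  | true :: _, [] => []
  | true :: m, a :: w => some a :: fillMask m w

theorem fillMask_map_isSome_reduceOption (x : List (Option α)) :
    fillMask (x.map Option.isSome) x.reduceOption = x := by
  induction x with
  | nil => rfl
  | cons a x ih => rcases a with _ | a <;> simpa [fillMask] using ih

theorem map_isSome_fillMask : ∀ (m : List Bool) (w : List α), w.length = m.count true →
    (fillMask m w).map Option.isSome = m
  | [], _, _ => rfl
  | false :: m, w, hw => by simpa [fillMask] using map_isSome_fillMask m w (by simpa using hw)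
  | true :: m, [], hw => by simp at hw
  | true :: m, a :: w, hw => by simpa [fillMask] using map_isSome_fillMask m w (by simpa using hw)

theorem reduceOption_fillMask : ∀ (m : List Bool) (w : List α), w.length = m.count true →
    (fillMask m w).reduceOption = w
  | [], w, hw => by simpa [fillMask, eq_comm] using hw
  | false :: m, w, hw => by simpa [fillMask] using reduceOption_fillMask m w (by simpa using hw)
  | true :: m, [], hw => by simp at hw
  | true :: m, a :: w, hw => by simpa [fillMask] using reduceOption_fillMask m w (by simpa using hw)

theorem count_true_map_isSome (x : List (Option α)) :
    (x.map Option.isSome).count true = x.reduceOption.length := by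
  simp [count, countP_map, reduceOption, length_filterMap_eq_countP, Function.comp_def]

def fillMaskEquiv (n k : ℕ) (P : List α → Prop) (hP : ∀ w, P w → w.length = k) :
    {m : List Bool // m.length = n ∧ m.count true = k} × {w // P w} ≃
      {x : List (Option α) // x.length = n ∧ P x.reduceOption} where
  toFun p := ⟨fillMask p.1.1 p.2.1, by
    have hw : p.2.1.length = p.1.1.count true := (hP _ p.2.2).trans p.1.2.2.symm
    rw [← length_map (f := Option.isSome), map_isSome_fillMask _ _ hw,
      reduceOption_fillMask _ _ hw]
    exact ⟨p.1.2.1, p.2.2⟩⟩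
  invFun x := (⟨x.1.map Option.isSome, by simp [x.2.1], by
      rw [count_true_map_isSome, hP _ x.2.2]⟩, ⟨x.1.reduceOption, x.2.2⟩)
  left_inv p := by
    have hw : p.2.1.length = p.1.1.count true := (hP _ p.2.2).trans p.1.2.2.symm
    ext1 <;> ext1 <;> simp [map_isSome_fillMask _ _ hw, reduceOption_fillMask _ _ hw]
  right_inv x := Subtype.ext (fillMask_map_isSome_reduceOption x.1)

theorem ncard_setOf_length_reduceOption (n k : ℕ) (P : List α → Prop)
    (hP : ∀ w, P w → w.length = k) :
    {x : List (Option α) | x.length = n ∧ P x.reduceOption}.ncard =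
      n.choose k * {w | P w}.ncard := by
  rw [← Nat.card_coe_set_eq, Set.coe_ofPred, ← Nat.card_congr (fillMaskEquiv n k P hP),
    Nat.card_prod, ← Set.coe_ofPred, Nat.card_coe_set_eq, ncard_setOf_length_count_true,
    ← Set.coe_ofPred, Nat.card_coe_set_eq]

end Masks

/-- The number of `UUU`-avoiding Dyck words of semilength `n` having exactly `j`
occurrences of the factor `UU` equals `binom(n,2j)·C_j`. -/
theorem stmt_3 (n j : ℕ) :
    {l : List Bool | IsDyckWord n l ∧ ¬ [true, true, true] <:+: l ∧
        countFactor [true, true] l = j}.ncard =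
      n.choose (2 * j) * catalan j := by
  rw [setOf_UUU_free_eq_image, Set.ncard_image_of_injective _ ofDyckBlocks_injective,
    ncard_setOf_length_reduceOption n (2 * j) _ fun _ => IsDyckWord.length_eq, ncard_isDyckWord]
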